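/- arXiv:1805.05677 — 3 statements merged into one kernel-verified Lean document; each statement's English description precedes it below -/
import Mathlib

section
/- For every 0 < θ < 1 there exists a constant c_θ > 0 such that for all x, y > 0, (x^θ − y^θ)/(x − y) = c_θ · ∫_{0}^{∞} t^θ · (1/(x+t)) · (1/(y+t)) dt, where for x = y the left-hand side is interpreted as θ·x^(θ−1). -/
open Real MeasureTheory Set

/-!
Since `1/(y+t) - 1/(x+t) = ∫_y^x (u+t)⁻² du`, Fubini and the substitution `t = u s` give
`(x - y) ∫_0^∞ t^θ/((x+t)(y+t)) dt = K ∫_y^x u^(θ-1) du = K (x^θ - y^θ)/θ`, where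
`K = ∫_0^∞ s^θ/(1+s)² ds > 0`; so `c_θ = θ/K`. The same substitution handles `x = y`.
-/

lemma integrableOn_rpow_div_add_sq_Ioi {θ : ℝ} (hθ₁ : -1 < θ) (hθ₂ : θ < 1) {a : ℝ}
    (ha : 0 < a) :
    IntegrableOn (fun t => t ^ θ / (a + t) ^ 2) (Ioi 0) := by
  rw [← Ioc_union_Ioi_eq_Ioi zero_le_one]
  refine IntegrableOn.union ?_ ?_
  · have hpow := (intervalIntegral.intervalIntegrable_rpow' hθ₁ (a := 0) (b := 1)).1
    refine Integrable.mono' (hpow.div_const (a ^ 2))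
      (by fun_prop : Measurable _).aestronglyMeasurable ?_
    filter_upwards [ae_restrict_mem measurableSet_Ioc] with t ht
    rw [norm_of_nonneg (div_nonneg (rpow_nonneg ht.1.le θ) (sq_nonneg _))]
    exact div_le_div_of_nonneg_left (rpow_nonneg ht.1.le θ) (by positivity)
      (by nlinarith [ht.1])
  · refine Integrable.mono' (integrableOn_Ioi_rpow_of_lt (by linarith : θ - 2 < -1) one_pos)
      (by fun_prop : Measurable _).aestronglyMeasurable ?_
    filter_upwards [ae_restrict_mem measurableSet_Ioi] with t (ht : 1 < t)
    have ht₀ : 0 < t := one_pos.trans ht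
    rw [norm_of_nonneg (by positivity), rpow_sub ht₀, rpow_two]
    gcongr
    linarith

lemma setIntegral_rpow_div_add_sq_Ioi (θ : ℝ) {a : ℝ} (ha : 0 < a) :
    ∫ t in Ioi 0, t ^ θ / (a + t) ^ 2 = a ^ (θ - 1) * ∫ t in Ioi 0, t ^ θ / (1 + t) ^ 2 := by
  have hsub := integral_comp_mul_left_Ioi' (fun t => t ^ θ / (a + t) ^ 2) 0 ha
  rw [mul_zero] at hsub
  rw [← hsub, smul_eq_mul, ← integral_const_mul, ← integral_const_mul]
  refine setIntegral_congr_fun measurableSet_Ioi fun s (hs : 0 < s) => ?_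
  rw [mul_rpow ha.le hs.le, rpow_sub_one ha.ne']
  field_simp

lemma setIntegral_rpow_div_one_add_sq_pos {θ : ℝ} (hθ₁ : -1 < θ) (hθ₂ : θ < 1) :
    0 < ∫ t in Ioi (0 : ℝ), t ^ θ / (1 + t) ^ 2 := by
  have hpos : ∀ t ∈ Ioi (0 : ℝ), 0 < t ^ θ / (1 + t) ^ 2 := fun t (ht : 0 < t) => by
    positivity
  rw [setIntegral_pos_iff_support_of_nonneg_ae
    ((ae_restrict_mem measurableSet_Ioi).mono fun t ht => (hpos t ht).le)
    (integrableOn_rpow_div_add_sq_Ioi hθ₁ hθ₂ one_pos)]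
  have hsupport : Function.support (fun t : ℝ => t ^ θ / (1 + t) ^ 2) ∩ Ioi 0 = Ioi 0 :=
    inter_eq_right.2 fun t ht => (hpos t ht).ne'
  rw [hsupport, Real.volume_Ioi]
  exact ENNReal.zero_lt_top

lemma integral_inv_add_sq {t x y : ℝ} (hy : 0 < y + t) (hyx : y ≤ x) :
    ∫ u in y..x, ((u + t) ^ 2)⁻¹ = (y + t)⁻¹ - (x + t)⁻¹ := by
  have hpos : ∀ u ∈ uIcc y x, 0 < u + t := fun u hu => by
    rw [uIcc_of_le hyx] at hu
    linarith [hu.1]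
  have hderiv : ∀ u ∈ uIcc y x, HasDerivAt (fun v => -(v + t)⁻¹) ((u + t) ^ 2)⁻¹ u :=
    fun u hu => (((hasDerivAt_id' u).add_const t).inv (hpos u hu).ne').neg.congr_deriv
      (by rw [neg_div, neg_neg, one_div])
  have hint : IntervalIntegrable (fun u => ((u + t) ^ 2)⁻¹) volume y x :=
    (ContinuousOn.inv₀ (by fun_prop) fun u hu => (pow_pos (hpos u hu) 2).ne').intervalIntegrable
  rw [intervalIntegral.integral_eq_sub_of_hasDerivAt hderiv hint]
  ring

lemma integrable_rpow_div_add_sq_prod {θ : ℝ} (hθ₁ : -1 < θ) (hθ₂ : θ < 1) {x y : ℝ}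
    (hy : 0 < y) :
    Integrable (Function.uncurry fun t u => t ^ θ / (u + t) ^ 2)
      ((volume.restrict (Ioi 0)).prod (volume.restrict (Ioc y x))) := by
  have hdom : Integrable (fun p : ℝ × ℝ => p.1 ^ θ / (y + p.1) ^ 2 * 1)
      ((volume.restrict (Ioi 0)).prod (volume.restrict (Ioc y x))) :=
    (integrableOn_rpow_div_add_sq_Ioi hθ₁ hθ₂ hy).mul_prod
      (integrableOn_const measure_Ioc_lt_top.ne)
  refine hdom.mono' (by fun_prop : Measurable _).aestronglyMeasurable ?_
  rw [Measure.prod_restrict]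
  filter_upwards [ae_restrict_mem (measurableSet_Ioi.prod measurableSet_Ioc)] with p hp
  obtain ⟨ht, hu⟩ := hp
  have ht₀ : 0 < p.1 := ht
  rw [Function.uncurry_apply_pair, mul_one, norm_of_nonneg (by positivity)]
  gcongr
  exact hu.1.le

lemma setIntegral_rpow_mul_one_div_add_mul_one_div_add_of_lt {θ : ℝ} (hθ₁ : -1 < θ)
    (hθ₂ : θ < 1) (hθ : θ ≠ 0) {x y : ℝ} (hy : 0 < y) (hyx : y < x) :
    ∫ t in Ioi 0, t ^ θ * (1 / (x + t)) * (1 / (y + t)) =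
      (x ^ θ - y ^ θ) / (θ * (x - y)) * ∫ t in Ioi 0, t ^ θ / (1 + t) ^ 2 := by
  have hxy : x - y ≠ 0 := sub_ne_zero.2 hyx.ne'
  have hinner : ∀ t ∈ Ioi (0 : ℝ), ∫ u in Ioc y x, t ^ θ / (u + t) ^ 2 =
      (x - y) * (t ^ θ * (1 / (x + t)) * (1 / (y + t))) := fun t (ht : 0 < t) => by
    simp_rw [div_eq_mul_inv (t ^ θ)]
    rw [← intervalIntegral.integral_of_le hyx.le, intervalIntegral.integral_const_mul,
      integral_inv_add_sq (by linarith) hyx.le]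
    have hxt : 0 < x + t := by linarith
    field_simp
    ring
  have hpower : ∫ u in Ioc y x, u ^ (θ - 1) = (x ^ θ - y ^ θ) / θ := by
    rw [← intervalIntegral.integral_of_le hyx.le,
      integral_rpow (Or.inr ⟨by simpa using hθ, fun h0 => ?_⟩), sub_add_cancel]
    rw [uIcc_of_le hyx.le] at h0
    linarith [h0.1]
  calc ∫ t in Ioi 0, t ^ θ * (1 / (x + t)) * (1 / (y + t))
      = (x - y)⁻¹ * ∫ t in Ioi 0, ∫ u in Ioc y x, t ^ θ / (u + t) ^ 2 := by
        rw [setIntegral_congr_fun measurableSet_Ioi hinner, integral_const_mul,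
          inv_mul_cancel_left₀ hxy]
    _ = (x - y)⁻¹ * ∫ u in Ioc y x, ∫ t in Ioi 0, t ^ θ / (u + t) ^ 2 := by
        rw [integral_integral_swap (integrable_rpow_div_add_sq_prod hθ₁ hθ₂ hy)]
    _ = (x - y)⁻¹ * ∫ u in Ioc y x, u ^ (θ - 1) * ∫ t in Ioi 0, t ^ θ / (1 + t) ^ 2 := by
        rw [setIntegral_congr_fun measurableSet_Ioc fun u hu =>
          setIntegral_rpow_div_add_sq_Ioi θ (hy.trans hu.1)]
    _ = (x ^ θ - y ^ θ) / (θ * (x - y)) * ∫ t in Ioi 0, t ^ θ / (1 + t) ^ 2 := by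
        rw [integral_mul_const, hpower]
        field_simp

lemma setIntegral_rpow_mul_one_div_add_mul_one_div_add_of_ne {θ : ℝ} (hθ₁ : -1 < θ)
    (hθ₂ : θ < 1) (hθ : θ ≠ 0) {x y : ℝ} (hx : 0 < x) (hy : 0 < y) (hxy : x ≠ y) :
    ∫ t in Ioi 0, t ^ θ * (1 / (x + t)) * (1 / (y + t)) =
      (x ^ θ - y ^ θ) / (θ * (x - y)) * ∫ t in Ioi 0, t ^ θ / (1 + t) ^ 2 := by
  rcases hxy.lt_or_gt with h | h
  · have hswap : (x ^ θ - y ^ θ) / (θ * (x - y)) = (y ^ θ - x ^ θ) / (θ * (y - x)) := by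
      rw [← neg_sub y x, ← neg_sub (y ^ θ), mul_neg, neg_div_neg_eq]
    rw [hswap, ← setIntegral_rpow_mul_one_div_add_mul_one_div_add_of_lt hθ₁ hθ₂ hθ hx h]
    exact setIntegral_congr_fun measurableSet_Ioi fun t _ => mul_right_comm _ _ _
  · exact setIntegral_rpow_mul_one_div_add_mul_one_div_add_of_lt hθ₁ hθ₂ hθ hy h

lemma setIntegral_rpow_mul_one_div_add_mul_one_div_add_self (θ : ℝ) {x : ℝ} (hx : 0 < x) :
    ∫ t in Ioi 0, t ^ θ * (1 / (x + t)) * (1 / (x + t)) =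
      x ^ (θ - 1) * ∫ t in Ioi 0, t ^ θ / (1 + t) ^ 2 := by
  rw [← setIntegral_rpow_div_add_sq_Ioi θ hx]
  refine setIntegral_congr_fun measurableSet_Ioi fun t _ => ?_
  rw [mul_assoc, one_div_mul_one_div, ← sq, mul_one_div]

theorem divided_difference_mellin_formula
    (θ : ℝ) (hθ0 : 0 < θ) (hθ1 : θ < 1) :
    ∃ c : ℝ, 0 < c ∧ ∀ x y : ℝ, 0 < x → 0 < y →
      (if x = y then θ * x ^ (θ - 1) else (x ^ θ - y ^ θ) / (x - y)) =
        c * ∫ t in Set.Ioi (0:ℝ), t ^ θ * (1 / (x + t)) * (1 / (y + t)) := by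
  have hθ : -1 < θ := by linarith
  set K := ∫ t in Ioi (0 : ℝ), t ^ θ / (1 + t) ^ 2 with hKdef
  have hK : 0 < K := setIntegral_rpow_div_one_add_sq_pos hθ hθ1
  refine ⟨θ / K, div_pos hθ0 hK, fun x y hx hy => ?_⟩
  split_ifs with hxy
  · rw [hxy, setIntegral_rpow_mul_one_div_add_mul_one_div_add_self θ hy, ← hKdef]
    field_simp
  · rw [setIntegral_rpow_mul_one_div_add_mul_one_div_add_of_ne hθ hθ1 hθ0.ne' hx hy hxy,
      ← hKdef]
    field_simp
end

section
/- Let 0 < θ < 1, let l ≥ 1 be an integer, and suppose x, y ≥ 0 are such that t·x + (1−t)·y ≥ 1/4 for all t ∈ [0,1]. Then every partial derivative of order l of the function g(x,y) = (x^θ − y^θ)/(x − y) (with g(x,x) = θ x^{θ−1}) at the point (x,y) is bounded in absolute value by 4^{l+1−θ} · θ·(1−θ)·(2−θ)···(l−θ). -/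
/-!
On the open quadrant `g` is the integral `∫₀¹ θ (t p₁ + (1 - t) p₂)^(θ-1) dt`. Differentiating
under the integral sign in a direction `u` brings down the factor `c (t u₁ + (1 - t) u₂)` and lowers
the exponent `c` by one, so the `l`-th derivative in the directions `(1,0)`, `(0,1)` is
`∫₀¹ θ (θ-1)⋯(θ-l) ∏ᵢ (t or 1 - t) · (t x + (1 - t) y)^(θ-1-l) dt`. The weights lie in `[0,1]`,
and the mean is at least `1/4` with a negative exponent, which gives the bound.
-/

open Real Finset

/-- The divided difference of `t ↦ t^θ`, as a function on `ℝ × ℝ`, with the diagonal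
value `θ * x^(θ-1)`. -/
noncomputable def divDiffRpow (θ : ℝ) (q : ℝ × ℝ) : ℝ :=
  if q.1 = q.2 then θ * q.1 ^ (θ - 1) else (q.1 ^ θ - q.2 ^ θ) / (q.1 - q.2)

open MeasureTheory Function Topology
open scoped Interval

theorem hasFDerivAt_intervalIntegral_of_continuousOn
    {H E : Type*} [NormedAddCommGroup H] [NormedSpace ℝ H] [ProperSpace H]
    [NormedAddCommGroup E] [NormedSpace ℝ E]
    {F : H → ℝ → E} {F' : H → ℝ → H →L[ℝ] E} {U : Set H} {a b : ℝ} (hU : IsOpen U)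
    (hF : ContinuousOn (uncurry F) (U ×ˢ [[a, b]]))
    (hF' : ContinuousOn (uncurry F') (U ×ˢ [[a, b]]))
    (hdiff : ∀ x ∈ U, ∀ t ∈ [[a, b]], HasFDerivAt (F · t) (F' x t) x)
    {x₀ : H} (hx₀ : x₀ ∈ U) :
    HasFDerivAt (fun x => ∫ t in a..b, F x t) (∫ t in a..b, F' x₀ t) x₀ := by
  obtain ⟨ε, hε, hball⟩ := Metric.nhds_basis_closedBall.mem_iff.1 (hU.mem_nhds hx₀)
  obtain ⟨C, hC⟩ := ((isCompact_closedBall x₀ ε).prod isCompact_uIcc).exists_bound_of_continuousOn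
    (hF'.mono (Set.prod_mono hball subset_rfl))
  refine intervalIntegral.hasFDerivAt_integral_of_dominated_of_fderiv_le (bound := fun _ => C)
    (Metric.closedBall_mem_nhds x₀ hε) ?_ (hF.uncurry_left x₀ hx₀).intervalIntegrable
    ((hF'.uncurry_left x₀ hx₀).mono Set.uIoc_subset_uIcc |>.aestronglyMeasurable measurableSet_uIoc)
    (ae_of_all _ fun t ht x hx => hC (x, t) ⟨hx, Set.uIoc_subset_uIcc ht⟩) intervalIntegrable_const
    (ae_of_all _ fun t ht x hx => hdiff x (hball hx) t (Set.uIoc_subset_uIcc ht))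
  filter_upwards [hU.mem_nhds hx₀] with x hx
  exact (hF.uncurry_left x hx).mono Set.uIoc_subset_uIcc |>.aestronglyMeasurable measurableSet_uIoc

noncomputable def weightedMean (t : ℝ) : ℝ × ℝ →L[ℝ] ℝ :=
  t • ContinuousLinearMap.fst ℝ ℝ ℝ + (1 - t) • ContinuousLinearMap.snd ℝ ℝ ℝ

@[simp]
theorem weightedMean_apply (t : ℝ) (p : ℝ × ℝ) : weightedMean t p = t * p.1 + (1 - t) * p.2 := by
  simp [weightedMean]

@[fun_prop]
theorem continuous_weightedMean : Continuous weightedMean := by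
  unfold weightedMean; fun_prop

theorem weightedMean_pos {p : ℝ × ℝ} (hp : p ∈ Set.Ioi 0 ×ˢ Set.Ioi 0) {t : ℝ}
    (ht : t ∈ Set.Icc 0 1) : 0 < weightedMean t p := by
  obtain ⟨hp₁, hp₂⟩ := hp
  rw [weightedMean_apply]
  rcases ht.1.eq_or_lt with rfl | ht₀
  · simpa using hp₂
  · nlinarith [mul_pos ht₀ hp₁, mul_nonneg (sub_nonneg.2 ht.2) (le_of_lt hp₂)]

noncomputable def meanPowIntegral (c : ℝ) (w : ℝ → ℝ) (p : ℝ × ℝ) : ℝ :=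
  ∫ t in (0 : ℝ)..1, w t * weightedMean t p ^ c

theorem continuousOn_meanPowIntegrand (c : ℝ) {w : ℝ → ℝ} (hw : Continuous w) :
    ContinuousOn (uncurry fun p t => w t * weightedMean t p ^ c)
      ((Set.Ioi 0 ×ˢ Set.Ioi 0) ×ˢ [[0, 1]]) := by
  refine (hw.comp continuous_snd).continuousOn.mul (ContinuousOn.rpow_const ?_ ?_)
  · fun_prop
  · rintro ⟨p, t⟩ ⟨hp, ht⟩
    rw [Set.uIcc_of_le zero_le_one] at ht
    exact Or.inl (weightedMean_pos hp ht).ne'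

section

variable {c : ℝ} {w : ℝ → ℝ}

theorem hasFDerivAt_meanPowIntegral (hw : Continuous w) {p : ℝ × ℝ}
    (hp : p ∈ Set.Ioi 0 ×ˢ Set.Ioi 0) :
    HasFDerivAt (meanPowIntegral c w)
      (∫ t in (0 : ℝ)..1, (c * w t * weightedMean t p ^ (c - 1)) • weightedMean t) p := by
  refine hasFDerivAt_intervalIntegral_of_continuousOn (isOpen_Ioi.prod isOpen_Ioi)
    (F' := fun p t => (c * w t * weightedMean t p ^ (c - 1)) • weightedMean t)
    (continuousOn_meanPowIntegrand c hw)
    ((continuousOn_meanPowIntegrand (c - 1) (w := fun t => c * w t) (by fun_prop)).smul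
      (continuous_weightedMean.comp continuous_snd).continuousOn) (fun q hq t ht => ?_) hp
  rw [Set.uIcc_of_le zero_le_one] at ht
  refine (((weightedMean t).hasFDerivAt.rpow_const
    (Or.inl (weightedMean_pos hq ht).ne')).const_mul (w t)).congr_fderiv ?_
  rw [smul_smul, mul_left_comm, mul_assoc]

theorem fderiv_meanPowIntegral_apply (hw : Continuous w) {p : ℝ × ℝ}
    (hp : p ∈ Set.Ioi 0 ×ˢ Set.Ioi 0) (u : ℝ × ℝ) :
    fderiv ℝ (meanPowIntegral c w) p u =
      meanPowIntegral (c - 1) (fun t => c * w t * weightedMean t u) p := by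
  have hint : IntervalIntegrable
      (fun t => (c * w t * weightedMean t p ^ (c - 1)) • weightedMean t) volume 0 1 :=
    (((continuousOn_meanPowIntegrand (c - 1) (w := fun t => c * w t) (by fun_prop)).uncurry_left
      p hp).smul continuous_weightedMean.continuousOn).intervalIntegrable
  rw [(hasFDerivAt_meanPowIntegral hw hp).fderiv, ContinuousLinearMap.intervalIntegral_apply hint]
  refine intervalIntegral.integral_congr fun t _ => ?_
  simp only [FunLike.coe_smul, Pi.smul_apply, smul_eq_mul]
  ring

theorem contDiffOn_meanPowIntegral (n : ℕ) (hw : Continuous w) :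
    ContDiffOn ℝ n (meanPowIntegral c w) (Set.Ioi 0 ×ˢ Set.Ioi 0) := by
  induction n generalizing c w with
  | zero =>
    exact contDiffOn_zero.2 fun p hp =>
      (hasFDerivAt_meanPowIntegral hw hp).continuousAt.continuousWithinAt
  | succ n ih =>
    refine contDiffOn_succ_of_fderiv_apply
      (fun p hp => (hasFDerivAt_meanPowIntegral hw hp).differentiableAt.differentiableWithinAt)
      (fun h => absurd h (by simp)) fun u =>
        (ih (c := c - 1) (w := fun t => c * w t * weightedMean t u) (by fun_prop)).congr
          fun p hp => ?_
    rw [fderivWithin_of_isOpen (isOpen_Ioi.prod isOpen_Ioi) hp, fderiv_meanPowIntegral_apply hw hp]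

theorem iteratedFDeriv_meanPowIntegral (n : ℕ) (hw : Continuous w) {p : ℝ × ℝ}
    (hp : p ∈ Set.Ioi 0 ×ˢ Set.Ioi 0) (v : Fin n → ℝ × ℝ) :
    iteratedFDeriv ℝ n (meanPowIntegral c w) p v =
      meanPowIntegral (c - n)
        (fun t => (∏ j ∈ range n, (c - j)) * w t * ∏ i, weightedMean t (v i)) p := by
  induction n generalizing p with
  | zero => simp [meanPowIntegral]
  | succ n ih =>
    have hU : IsOpen (Set.Ioi (0 : ℝ) ×ˢ Set.Ioi (0 : ℝ)) := isOpen_Ioi.prod isOpen_Ioi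
    have hdiff : DifferentiableAt ℝ (iteratedFDeriv ℝ n (meanPowIntegral c w)) p :=
      ((contDiffOn_meanPowIntegral (n + 1) hw).contDiffAt
        (hU.mem_nhds hp)).differentiableAt_iteratedFDeriv (by exact_mod_cast n.lt_succ_self)
    have hloc : (fun q => iteratedFDeriv ℝ n (meanPowIntegral c w) q (Fin.tail v)) =ᶠ[𝓝 p]
        meanPowIntegral (c - n)
          (fun t => (∏ j ∈ range n, (c - j)) * w t * ∏ i, weightedMean t (Fin.tail v i)) :=
      Filter.eventually_of_mem (hU.mem_nhds hp) fun q hq => ih hq _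
    rw [iteratedFDeriv_succ_apply_left, ← fderiv_continuousMultilinear_apply_const_apply hdiff,
      hloc.fderiv_eq, fderiv_meanPowIntegral_apply (by fun_prop) hp]
    refine intervalIntegral.integral_congr fun t _ => ?_
    simp only [Fin.prod_univ_succ, prod_range_succ, Fin.tail]
    push_cast
    ring_nf

end

theorem divDiffRpow_eqOn_meanPowIntegral (θ : ℝ) :
    Set.EqOn (divDiffRpow θ) (meanPowIntegral (θ - 1) fun _ => θ) (Set.Ioi 0 ×ˢ Set.Ioi 0) := by
  rintro ⟨a, b⟩ ⟨ha, hb⟩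
  simp only [Set.mem_Ioi] at ha hb
  simp only [divDiffRpow, meanPowIntegral, weightedMean_apply]
  split_ifs with hab
  · subst hab
    simp [← add_mul]
  -- `integral_rpow` excludes the exponent `-1`; for `θ = 0` both sides vanish.
  rcases eq_or_ne θ 0 with rfl | hθ
  · simp
  have hb0 : (0 : ℝ) ∉ [[b, a]] := fun h => (lt_min hb ha).not_ge (by simpa using h.1)
  have hline : ∀ t : ℝ, t * a + (1 - t) * b = (a - b) * t + b := fun t => by ring
  simp_rw [hline]
  rw [intervalIntegral.integral_comp_mul_add (fun u => θ * u ^ (θ - 1)) (sub_ne_zero.2 hab),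
    intervalIntegral.integral_const_mul, integral_rpow (Or.inr ⟨by simpa using hθ, ?_⟩)]
  · simp only [mul_zero, zero_add, mul_one, sub_add_cancel, smul_eq_mul]
    field_simp
  · simpa using hb0

theorem abs_prod_range_sub_natCast {θ : ℝ} (hθ : θ ≤ 1) (n : ℕ) :
    |∏ j ∈ range n, (θ - 1 - j)| = ∏ j ∈ Icc 1 n, ((j : ℝ) - θ) := by
  induction n with
  | zero => simp
  | succ n ih =>
    rw [prod_range_succ, abs_mul, ih, prod_Icc_succ_top (by omega),
      abs_of_nonpos (by linarith [n.cast_nonneg (α := ℝ)])]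
    push_cast
    ring

theorem abs_meanPowIntegral_le {c C : ℝ} {w : ℝ → ℝ} {p : ℝ × ℝ}
    (h : ∀ t ∈ Set.Icc 0 1, |w t * weightedMean t p ^ c| ≤ C) : |meanPowIntegral c w p| ≤ C := by
  have hnorm : ∀ t ∈ Ι (0 : ℝ) 1, ‖w t * weightedMean t p ^ c‖ ≤ C := fun t ht =>
    h t (Set.Ioc_subset_Icc_self (by simpa using ht))
  simpa [meanPowIntegral] using intervalIntegral.norm_integral_le_of_norm_le_const hnorm

theorem abs_weightedMean_le_one {t : ℝ} (ht : t ∈ Set.Icc 0 1) {u : ℝ × ℝ}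
    (hu : u = (1, 0) ∨ u = (0, 1)) : |weightedMean t u| ≤ 1 := by
  obtain ⟨ht₀, ht₁⟩ := ht
  rcases hu with rfl | rfl <;> simp <;> rw [abs_le] <;> constructor <;> linarith

theorem divided_difference_derivative_bounds_general
    (θ : ℝ) (hθ0 : 0 < θ) (hθ1 : θ < 1) (l : ℕ)
    (x y : ℝ)
    (hfar : ∀ t ∈ Set.Icc (0:ℝ) 1, (1:ℝ)/4 ≤ t * x + (1 - t) * y)
    (v : Fin l → ℝ × ℝ) (hv : ∀ i, v i = ((1:ℝ), (0:ℝ)) ∨ v i = ((0:ℝ), (1:ℝ))) :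
    ‖iteratedFDeriv ℝ l (divDiffRpow θ) (x, y) v‖ ≤
      (4:ℝ) ^ ((l : ℝ) + 1 - θ) * (θ * ∏ j ∈ Finset.Icc 1 l, ((j : ℝ) - θ)) := by
  have hmean : ∀ t ∈ Set.Icc (0 : ℝ) 1, 1 / 4 ≤ weightedMean t (x, y) := by simpa using hfar
  have hq : (x, y) ∈ Set.Ioi 0 ×ˢ Set.Ioi 0 :=
    ⟨by simpa using (hmean 1 (by simp)).trans_lt' (by norm_num),
      by simpa using (hmean 0 (by simp)).trans_lt' (by norm_num)⟩
  have hloc : divDiffRpow θ =ᶠ[𝓝 (x, y)] meanPowIntegral (θ - 1) fun _ => θ :=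
    (divDiffRpow_eqOn_meanPowIntegral θ).eventuallyEq_of_mem
      ((isOpen_Ioi.prod isOpen_Ioi).mem_nhds hq)
  rw [(hloc.iteratedFDeriv ℝ l).eq_of_nhds, iteratedFDeriv_meanPowIntegral l continuous_const hq]
  refine abs_meanPowIntegral_le fun t ht => ?_
  have hpow : weightedMean t (x, y) ^ ((θ - 1) - l) ≤ 4 ^ ((l : ℝ) + 1 - θ) := by
    calc weightedMean t (x, y) ^ ((θ - 1) - l) ≤ (1 / 4) ^ ((θ - 1) - l) :=
          rpow_le_rpow_of_nonpos (by norm_num) (hmean t ht) (by linarith [l.cast_nonneg (α := ℝ)])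
      _ = 4 ^ ((l : ℝ) + 1 - θ) := by
          rw [one_div, inv_rpow zero_le_four, ← rpow_neg zero_le_four]; ring_nf
  have hprod : |∏ i, weightedMean t (v i)| ≤ 1 := by
    rw [abs_prod]
    exact prod_le_one (fun _ _ => abs_nonneg _) fun i _ => abs_weightedMean_le_one ht (hv i)
  have hpos := rpow_pos_of_pos (weightedMean_pos hq ht) ((θ - 1) - l)
  rw [abs_mul, abs_mul, abs_mul, abs_of_pos hθ0, abs_of_pos hpos]
  calc |∏ j ∈ range l, (θ - 1 - j)| * θ * |∏ i, weightedMean t (v i)| *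
        weightedMean t (x, y) ^ ((θ - 1) - l)
      ≤ |∏ j ∈ range l, (θ - 1 - j)| * θ * 1 * 4 ^ ((l : ℝ) + 1 - θ) := by gcongr
    _ = 4 ^ ((l : ℝ) + 1 - θ) * (θ * ∏ j ∈ Icc 1 l, ((j : ℝ) - θ)) := by
        rw [abs_prod_range_sub_natCast hθ1.le]; ring

theorem divided_difference_derivative_bounds
    (θ : ℝ) (hθ0 : 0 < θ) (hθ1 : θ < 1) (l : ℕ) (hl : 1 ≤ l)
    (x y : ℝ) (hx : 0 ≤ x) (hy : 0 ≤ y)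
    (hfar : ∀ t ∈ Set.Icc (0:ℝ) 1, (1:ℝ)/4 ≤ t * x + (1 - t) * y)
    (v : Fin l → ℝ × ℝ) (hv : ∀ i, v i = ((1:ℝ), (0:ℝ)) ∨ v i = ((0:ℝ), (1:ℝ))) :
    ‖iteratedFDeriv ℝ l (divDiffRpow θ) (x, y) v‖ ≤
      (4:ℝ) ^ ((l : ℝ) + 1 - θ) * (θ * ∏ j ∈ Finset.Icc 1 l, ((j : ℝ) - θ)) :=
  divided_difference_derivative_bounds_general θ hθ0 hθ1 l x y hfar v hv
end

section
/- Let 0 < p < q ≤ ∞ and set θ = p/q ∈ (0,1). For sequences x, y in ℓ_p(ℕ) of real numbers, define the Mazur map M_{p,q}(x)_n = sgn(x_n)·|x_n|^{p/q}. Then there is a constant C_{p,q} such that ‖M_{p,q}(x) − M_{p,q}(y)‖_q ≤ C_{p,q}·‖x − y‖_p^{θ}. -/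
open Real

/-- The Mazur map `M_{p,q}` on real sequences: `(M_{p,q} x)_n = sgn(x_n) |x_n|^{p/q}`. -/
noncomputable def mazurMap (p q : ℝ) (x : ℕ → ℝ) : ℕ → ℝ :=
  fun n => Real.sign (x n) * |x n| ^ (p / q)

/-- Subadditivity of `t ↦ t ^ θ` on nonneg reals for `θ ≤ 1`. -/
lemma real_rpow_add_le_add_rpow {a b θ : ℝ} (ha : 0 ≤ a) (hb : 0 ≤ b)
    (h0 : 0 ≤ θ) (h1 : θ ≤ 1) : (a + b) ^ θ ≤ a ^ θ + b ^ θ := by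
  lift a to NNReal using ha
  lift b to NNReal using hb
  have := NNReal.rpow_add_le_add_rpow a b h0 h1
  exact_mod_cast this

lemma rpow_sub_rpow_le {a b θ : ℝ} (hb : 0 ≤ b) (hba : b ≤ a)
    (h0 : 0 ≤ θ) (h1 : θ ≤ 1) : a ^ θ - b ^ θ ≤ (a - b) ^ θ := by
  have ha : a = (a - b) + b := by ring
  have := real_rpow_add_le_add_rpow (sub_nonneg.2 hba) hb h0 h1
  calc a ^ θ - b ^ θ = ((a - b) + b) ^ θ - b ^ θ := by ring_nf
    _ ≤ ((a - b) ^ θ + b ^ θ) - b ^ θ := by linarith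
    _ = (a - b) ^ θ := by ring

/-- `| a^θ - b^θ | ≤ |a-b|^θ` for nonneg `a b` and `θ ∈ [0,1]`. -/
lemma abs_rpow_sub_rpow_le {a b θ : ℝ} (ha : 0 ≤ a) (hb : 0 ≤ b)
    (h0 : 0 ≤ θ) (h1 : θ ≤ 1) : |a ^ θ - b ^ θ| ≤ |a - b| ^ θ := by
  rcases le_total b a with h | h
  · rw [abs_of_nonneg (sub_nonneg.2 (Real.rpow_le_rpow hb h h0)),
      abs_of_nonneg (sub_nonneg.2 h)]
    exact rpow_sub_rpow_le hb h h0 h1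
  · rw [abs_sub_comm, abs_sub_comm a b,
      abs_of_nonneg (sub_nonneg.2 (Real.rpow_le_rpow ha h h0)),
      abs_of_nonneg (sub_nonneg.2 h)]
    exact rpow_sub_rpow_le ha h h0 h1

lemma sign_mul_abs_rpow_of_nonneg {a θ : ℝ} (ha : 0 ≤ a) (h0 : 0 < θ) :
    Real.sign a * |a| ^ θ = a ^ θ := by
  rcases eq_or_lt_of_le ha with h | h
  · simp [← h, Real.sign_zero, Real.zero_rpow h0.ne']
  · rw [Real.sign_of_pos h, abs_of_pos h, one_mul]

lemma sign_mul_abs_rpow_of_nonpos {a θ : ℝ} (ha : a ≤ 0) (h0 : 0 < θ) :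
    Real.sign a * |a| ^ θ = -((-a) ^ θ) := by
  rcases eq_or_lt_of_le ha with h | h
  · simp [h, Real.sign_zero, Real.zero_rpow h0.ne']
  · rw [Real.sign_of_neg h, abs_of_neg h, neg_one_mul]

/-- Pointwise Hölder estimate for the signed power function. -/
lemma sign_rpow_holder {a b θ : ℝ} (h0 : 0 < θ) (h1 : θ ≤ 1) :
    |Real.sign a * |a| ^ θ - Real.sign b * |b| ^ θ| ≤ 2 * |a - b| ^ θ := by
  have key : ∀ a b : ℝ, 0 ≤ a → b ≤ 0 →
      |Real.sign a * |a| ^ θ - Real.sign b * |b| ^ θ| ≤ 2 * |a - b| ^ θ := by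
    intro a b ha hb
    rw [sign_mul_abs_rpow_of_nonneg ha h0, sign_mul_abs_rpow_of_nonpos hb h0,
      sub_neg_eq_add,
      abs_of_nonneg (add_nonneg (Real.rpow_nonneg ha θ) (Real.rpow_nonneg (neg_nonneg.2 hb) θ)),
      abs_of_nonneg (by linarith : (0:ℝ) ≤ a - b)]
    have h1' : a ^ θ ≤ (a - b) ^ θ := Real.rpow_le_rpow ha (by linarith) h0.le
    have h2' : (-b) ^ θ ≤ (a - b) ^ θ := Real.rpow_le_rpow (by linarith) (by linarith) h0.le
    linarith
  rcases le_total 0 a with ha | ha <;> rcases le_total 0 b with hb | hb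
  · rw [sign_mul_abs_rpow_of_nonneg ha h0, sign_mul_abs_rpow_of_nonneg hb h0]
    have := abs_rpow_sub_rpow_le ha hb h0.le h1
    nlinarith [Real.rpow_nonneg (abs_nonneg (a - b)) θ]
  · exact key a b ha hb
  · rw [abs_sub_comm, abs_sub_comm a b]
    exact key b a hb ha
  · rw [sign_mul_abs_rpow_of_nonpos ha h0, sign_mul_abs_rpow_of_nonpos hb h0]
    have := abs_rpow_sub_rpow_le (by linarith : (0:ℝ) ≤ -b) (by linarith : (0:ℝ) ≤ -a) h0.le h1
    rw [show -b - -a = a - b by ring] at this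
    rw [show -(-a) ^ θ - -(-b) ^ θ = (-b) ^ θ - (-a) ^ θ by ring]
    nlinarith [Real.rpow_nonneg (abs_nonneg (a - b)) θ]

theorem mazurMap_holder (p q : ℝ) (hp : 0 < p) (hpq : p < q) :
    ∃ C : ℝ, 0 < C ∧ ∀ x y : ℕ → ℝ,
      Summable (fun n => |x n| ^ p) → Summable (fun n => |y n| ^ p) →
      (∑' n, |mazurMap p q x n - mazurMap p q y n| ^ q) ^ (1 / q) ≤
        C * ((∑' n, |x n - y n| ^ p) ^ (1 / p)) ^ (p / q) := by
  have hq : 0 < q := hp.trans hpq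
  set θ := p / q with hθdef
  have hθ0 : 0 < θ := div_pos hp hq
  have hθ1 : θ ≤ 1 := le_of_lt ((div_lt_one hq).2 hpq)
  refine ⟨2, two_pos, fun x y hx hy => ?_⟩
  -- summability of |x - y|^p
  have hd : Summable (fun n => |x n - y n| ^ p) := by
    apply Summable.of_nonneg_of_le (fun n => Real.rpow_nonneg (abs_nonneg _) p)
      (fun n => ?_) (((hx.add hy).mul_left ((2:ℝ) ^ p)))
    have h1 : |x n - y n| ≤ 2 * max |x n| |y n| := by
      calc |x n - y n| ≤ |x n| + |y n| := abs_sub _ _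
        _ ≤ 2 * max |x n| |y n| := by
          rcases le_total |x n| |y n| with h | h <;> simp [max_eq_right, max_eq_left, h] <;> linarith
    calc |x n - y n| ^ p ≤ (2 * max |x n| |y n|) ^ p :=
          Real.rpow_le_rpow (abs_nonneg _) h1 hp.le
      _ = 2 ^ p * max |x n| |y n| ^ p := Real.mul_rpow (by norm_num) (le_max_of_le_left (abs_nonneg _))
      _ ≤ 2 ^ p * (|x n| ^ p + |y n| ^ p) := by
          apply mul_le_mul_of_nonneg_left _ (Real.rpow_nonneg (by norm_num) p)
          rcases le_total |x n| |y n| with h | h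
          · rw [max_eq_right h]
            nlinarith [Real.rpow_nonneg (abs_nonneg (x n)) p]
          · rw [max_eq_left h]
            nlinarith [Real.rpow_nonneg (abs_nonneg (y n)) p]
  -- pointwise bound on the q-th powers
  have hpt : ∀ n, |mazurMap p q x n - mazurMap p q y n| ^ q ≤ 2 ^ q * |x n - y n| ^ p := by
    intro n
    have h1 := sign_rpow_holder (a := x n) (b := y n) hθ0 hθ1
    calc |mazurMap p q x n - mazurMap p q y n| ^ q
        ≤ (2 * |x n - y n| ^ θ) ^ q :=
          Real.rpow_le_rpow (abs_nonneg _) h1 hq.le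
      _ = 2 ^ q * (|x n - y n| ^ θ) ^ q :=
          Real.mul_rpow (by norm_num) (Real.rpow_nonneg (abs_nonneg _) θ)
      _ = 2 ^ q * |x n - y n| ^ p := by
          rw [← Real.rpow_mul (abs_nonneg _), hθdef, div_mul_cancel₀ _ hq.ne']
  -- summability of the q-th powers
  have hsum2 : Summable (fun n => |mazurMap p q x n - mazurMap p q y n| ^ q) :=
    Summable.of_nonneg_of_le (fun n => Real.rpow_nonneg (abs_nonneg _) q) hpt
      (hd.mul_left _)
  have hS0 : 0 ≤ ∑' n, |x n - y n| ^ p :=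
    tsum_nonneg fun n => Real.rpow_nonneg (abs_nonneg _) p
  have hts : (∑' n, |mazurMap p q x n - mazurMap p q y n| ^ q) ≤
      2 ^ q * ∑' n, |x n - y n| ^ p := by
    calc (∑' n, |mazurMap p q x n - mazurMap p q y n| ^ q)
        ≤ ∑' n, 2 ^ q * |x n - y n| ^ p := Summable.tsum_le_tsum hpt hsum2 (hd.mul_left _)
      _ = 2 ^ q * ∑' n, |x n - y n| ^ p := tsum_mul_left
  calc (∑' n, |mazurMap p q x n - mazurMap p q y n| ^ q) ^ (1 / q)
      ≤ (2 ^ q * ∑' n, |x n - y n| ^ p) ^ (1 / q) := by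
        apply Real.rpow_le_rpow (tsum_nonneg fun n => Real.rpow_nonneg (abs_nonneg _) q)
          hts (by positivity)
    _ = 2 * (∑' n, |x n - y n| ^ p) ^ (1 / q) := by
        rw [Real.mul_rpow (by positivity) hS0, ← Real.rpow_mul (by norm_num : (0:ℝ) ≤ 2),
          mul_one_div_cancel hq.ne', Real.rpow_one]
    _ = 2 * ((∑' n, |x n - y n| ^ p) ^ (1 / p)) ^ (p / q) := by
        rw [← Real.rpow_mul hS0]
        congr 1
        field_simp
end
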